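/- arXiv:2401.02910 — 6 statements merged into one kernel-verified Lean document; each statement's English description precedes it below -/
import Mathlib

section
/- Let $f : \mathbb{R}/\mathbb{Z} \to \mathbb{R}$ be a smooth strictly positive periodic function. If the function $S = \frac{f''}{2f^2} - \frac{(f')^2}{f^3}$ is constant, then $f$ is constant and $S = 0$. -/
/-- A differentiable function with constant derivative is affine. -/
lemma aux_affine (u : ℝ → ℝ) (k : ℝ) (hu : Differentiable ℝ u)
    (hk : ∀ x, deriv u x = k) : ∀ x, u x = u 0 + k * x := by
  intro x
  have hv : Differentiable ℝ (fun t => u t - k * t) := by fun_prop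
  have h1 : ∀ y, deriv (fun t => u t - k * t) y = 0 := by
    intro y
    have h2 : HasDerivAt (fun t : ℝ => k * t) k y := by
      simpa using (hasDerivAt_id y).const_mul k
    rw [deriv_fun_sub (hu y) h2.differentiableAt, hk y, h2.deriv, sub_self]
  have h2 := is_const_of_deriv_eq_zero hv h1 x 0
  simp only [mul_zero, sub_zero] at h2
  linarith

/-- if `f` is a smooth strictly positive 1-periodic function on the circle and
the scalar curvature `S = f''/(2f²) - (f')²/f³` is constant, then `f` is constant and `S = 0`. -/
theorem stmt_1 (f : ℝ → ℝ) (hf : ContDiff ℝ (⊤ : ℕ∞) f) (hper : ∀ x, f (x + 1) = f x)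
    (hpos : ∀ x, 0 < f x) (c : ℝ)
    (hS : ∀ x, deriv (deriv f) x / (2 * f x ^ 2) - (deriv f x) ^ 2 / f x ^ 3 = c) :
    (∀ x y, f x = f y) ∧ c = 0 := by
  have hfd : Differentiable ℝ f := hf.differentiable (by simp)
  have hf2 : ContDiff ℝ (↑(⊤ : ℕ∞)) f := hf.of_le (by simp)
  have hfd'' : Differentiable ℝ (deriv f) :=
    ((contDiff_infty_iff_deriv.mp hf2).2).differentiable (by simp)
  have hne : ∀ x, f x ≠ 0 := fun x => (hpos x).ne'
  set g : ℝ → ℝ := fun x => (f x)⁻¹ with hg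
  have hgd : Differentiable ℝ g := fun x => ((hfd x).inv (hne x))
  have hderiv_g : ∀ x, deriv g x = -deriv f x / f x ^ 2 := by
    intro x
    exact deriv_inv'' (hfd x) (hne x)
  have hderiv_g_fun : deriv g = fun x => -deriv f x / f x ^ 2 := funext hderiv_g
  have hdg_diff : Differentiable ℝ (deriv g) := by
    rw [hderiv_g_fun]
    exact (hfd''.neg).div (hfd.pow 2) (fun x => pow_ne_zero 2 (hne x))
  -- second derivative of g is -2c
  have hderiv2 : ∀ x, deriv (deriv g) x = -(2 * c) := by
    intro x
    rw [hderiv_g_fun]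
    rw [deriv_fun_div (c := fun x => -deriv f x) (d := fun x => f x ^ 2) (hfd'' x).neg ((hfd x).pow 2) (pow_ne_zero 2 (hne x))]
    rw [deriv.fun_neg, deriv_fun_pow (hfd x) 2]
    have hSx := hS x
    have h1 : f x ≠ 0 := hne x
    field_simp at hSx ⊢
    norm_num
    apply mul_right_cancel₀ h1
    linear_combination -(f x) ^ 2 * hSx
  -- periodicity of g and deriv g
  have hgper : ∀ x, g (x + 1) = g x := fun x => by simp [hg, hper x]
  have hdgper : ∀ x, deriv g (x + 1) = deriv g x := by
    intro x
    have h1 : (fun y => g (y + 1)) = g := funext hgper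
    rw [← deriv_comp_add_const, h1]
  -- deriv g is affine
  have haff : ∀ x, deriv g x = deriv g 0 + -(2 * c) * x :=
    aux_affine (deriv g) (-(2 * c)) hdg_diff hderiv2
  have hc : c = 0 := by
    have h1 := hdgper 0
    rw [zero_add] at h1
    have h2 := haff 1
    rw [h1, haff 0] at h2
    linarith
  subst hc
  have hdgconst : ∀ x, deriv g x = deriv g 0 := by
    intro x
    have := haff x
    simpa using this
  have hgaff : ∀ x, g x = g 0 + deriv g 0 * x := aux_affine g (deriv g 0) hgd hdgconst
  have hd0 : deriv g 0 = 0 := by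
    have h1 := hgper 0
    rw [zero_add] at h1
    have h2 := hgaff 1
    rw [h1] at h2
    linarith
  refine ⟨fun x y => ?_, rfl⟩
  have hx := hgaff x
  have hy := hgaff y
  rw [hd0] at hx hy
  simp only [zero_mul, add_zero] at hx hy
  have : (f x)⁻¹ = (f y)⁻¹ := by rw [show (f x)⁻¹ = g x from rfl, show (f y)⁻¹ = g y from rfl, hx, hy]
  exact inv_injective this
end

section
/- Let $\tau : ]-2,\infty[ \to \mathbb{R}$ be defined by $\tau(h) = -\frac{4\pi}{11}\left(2(h+2)^3 - 5(h+2)^2 - 15 + \frac{18}{h+2}\right)$. Then $\tau$ satisfies the boundary conditions $\tau(1) = \tau(-1) = 0$, $\tau'(1) = -8\pi$, $\tau'(-1) = 8\pi$, and moreover $-\frac{1}{2}\tau''(h) - \frac{\tau'(h)}{h+2} = \frac{4\pi}{11}(12h + 9)$ for all $h \in ]-2,\infty[$. -/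
open Real

/-- The profile function `τ` of the extremal Kähler metric on the non-trivial
`S²`-bundle over `T²`. -/
noncomputable def tauNT : ℝ → ℝ := fun h =>
  -(4 * π / 11) * (2 * (h + 2) ^ 3 - 5 * (h + 2) ^ 2 - 15 + 18 / (h + 2))

open Filter Topology

theorem deriv_deriv_eq_of_eventually_hasDerivAt {𝕜 F : Type*} [NontriviallyNormedField 𝕜]
    [NormedAddCommGroup F] [NormedSpace 𝕜 F] {f f' : 𝕜 → F} {f'' : F} {x : 𝕜}
    (hf : ∀ᶠ y in 𝓝 x, HasDerivAt f (f' y) y) (hf' : HasDerivAt f' f'' x) :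
    deriv (deriv f) x = f'' := by
  have hderiv : deriv f =ᶠ[𝓝 x] f' := hf.mono fun _ hy => hy.deriv
  rw [hderiv.deriv_eq, hf'.deriv]

noncomputable def derivTauNT (h : ℝ) : ℝ :=
  -(4 * π / 11) * (6 * (h + 2) ^ 2 - 10 * (h + 2) - 18 / (h + 2) ^ 2)

noncomputable def derivDerivTauNT (h : ℝ) : ℝ :=
  -(4 * π / 11) * (12 * (h + 2) - 10 + 36 / (h + 2) ^ 3)

theorem hasDerivAt_tauNT {h : ℝ} (hh : h + 2 ≠ 0) : HasDerivAt tauNT (derivTauNT h) h := by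
  have hx : HasDerivAt (fun x : ℝ => x + 2) 1 h := (hasDerivAt_id h).add_const 2
  have H := ((((hx.fun_pow 3).const_mul 2).fun_sub ((hx.fun_pow 2).const_mul 5)).sub_const 15
    |>.fun_add ((hasDerivAt_const h (18 : ℝ)).fun_div hx hh)).const_mul (-(4 * π / 11))
  refine H.congr_deriv ?_
  rw [derivTauNT]
  field_simp
  ring

theorem hasDerivAt_derivTauNT {h : ℝ} (hh : h + 2 ≠ 0) :
    HasDerivAt derivTauNT (derivDerivTauNT h) h := by
  have hx : HasDerivAt (fun x : ℝ => x + 2) 1 h := (hasDerivAt_id h).add_const 2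
  have H := ((((hx.fun_pow 2).const_mul 6).fun_sub (hx.const_mul 10)).fun_sub
    ((hasDerivAt_const h (18 : ℝ)).fun_div (hx.fun_pow 2) (pow_ne_zero 2 hh))).const_mul
    (-(4 * π / 11))
  refine H.congr_deriv ?_
  rw [derivDerivTauNT]
  field_simp
  ring

theorem deriv_tauNT {h : ℝ} (hh : h + 2 ≠ 0) : deriv tauNT h = derivTauNT h :=
  (hasDerivAt_tauNT hh).deriv

theorem deriv_deriv_tauNT {h : ℝ} (hh : h + 2 ≠ 0) :
    deriv (deriv tauNT) h = derivDerivTauNT h := by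
  have hnear : ∀ᶠ y in 𝓝 h, y + 2 ≠ 0 :=
    (continuous_id.add continuous_const).continuousAt.eventually_ne hh
  exact deriv_deriv_eq_of_eventually_hasDerivAt (hnear.mono fun _ => hasDerivAt_tauNT)
    (hasDerivAt_derivTauNT hh)

/-- boundary conditions and the scalar curvature identity for `τ`. -/
theorem stmt_3 :
    tauNT 1 = 0 ∧ tauNT (-1) = 0 ∧
    deriv tauNT 1 = -(8 * π) ∧ deriv tauNT (-1) = 8 * π ∧
    ∀ h : ℝ, -2 < h →
      -(1 / 2) * deriv (deriv tauNT) h - deriv tauNT h / (h + 2)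
        = 4 * π / 11 * (12 * h + 9) := by
  refine ⟨by norm_num [tauNT], by norm_num [tauNT], ?_, ?_, fun h hh => ?_⟩
  · rw [deriv_tauNT (by norm_num)]
    norm_num [derivTauNT]
    ring
  · rw [deriv_tauNT (by norm_num)]
    norm_num [derivTauNT]
    ring
  · have hne : h + 2 ≠ 0 := by linarith
    rw [deriv_tauNT hne, deriv_deriv_tauNT hne, derivTauNT, derivDerivTauNT]
    field_simp
    ring
end

section
/- Let $\Delta$ be an open subset of $\mathbb{R}^n_k = [0,\infty)^k \times \mathbb{R}^{n-k}$ and suppose smooth functions $g_{ij} = g_{ji}$ on $\Delta$ ($1 \le i,j \le n$) satisfy the Hessian equations: $\partial_j g_{ii} = x^i \partial_i g_{ij}$ for $i \le k$, $i \neq j$, and $\partial_l g_{ij} = \partial_j g_{il}$ whenever $(i,j),(i,l) \in I_k$, where $I_k = \{(i,j) : i \neq j \text{ or } i = j > k\}$. Then for each $i \le k$ the restriction of $g_{ii}$ to $\{x^i = 0\} \cap \Delta$ is locally constant. -/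
/-- for a Hessian hybrid `b`-metric with coefficients `g i j` on an open
subset `Δ` of the corner model `ℝⁿ_k = [0,∞)ᵏ × ℝ^{n-k}`, the boundary restriction of
`g i i` to `{xⁱ = 0}` is locally constant, for each `i ≤ k`. -/
theorem stmt_8 (n k : ℕ) (hk : k ≤ n) (U : Set (Fin n → ℝ)) (hU : IsOpen U)
    (Δ : Set (Fin n → ℝ))
    (hΔ : Δ = U ∩ {x | ∀ i : Fin n, (i : ℕ) < k → 0 ≤ x i})
    (g : Fin n → Fin n → (Fin n → ℝ) → ℝ)
    (hsmooth : ∀ i j, ContDiffOn ℝ (⊤ : ℕ∞) (g i j) U)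
    (hsym : ∀ i j, ∀ x ∈ Δ, g i j x = g j i x)
    -- Hessian equation `∂_j g_{ii} = xⁱ ∂_i g_{ij}` for `i ≤ k`, `i ≠ j`:
    (heq1 : ∀ i j : Fin n, (i : ℕ) < k → i ≠ j → ∀ x ∈ Δ,
      fderiv ℝ (g i i) x (Pi.single j 1) = x i * fderiv ℝ (g i j) x (Pi.single i 1))
    -- Hessian equation `∂_l g_{ij} = ∂_j g_{il}` for `(i,j), (i,l) ∈ I_k`:
    (heq2 : ∀ i j l : Fin n, (i ≠ j ∨ k ≤ (i : ℕ)) → (i ≠ l ∨ k ≤ (i : ℕ)) → ∀ x ∈ Δ,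
      fderiv ℝ (g i j) x (Pi.single l 1) = fderiv ℝ (g i l) x (Pi.single j 1)) :
    ∀ i : Fin n, (i : ℕ) < k → ∀ x ∈ Δ, x i = 0 →
      ∃ V ∈ nhdsWithin x {y ∈ Δ | y i = 0}, ∀ y ∈ V, g i i y = g i i x := by
  intro i hi x hx hxi
  have hxU : x ∈ U := by rw [hΔ] at hx; exact hx.1
  obtain ⟨ε, hε, hball⟩ := Metric.isOpen_iff.1 hU x hxU
  refine ⟨Metric.ball x ε ∩ {y ∈ Δ | y i = 0}, Filter.inter_mem
    (mem_nhdsWithin_of_mem_nhds (Metric.ball_mem_nhds x hε)) self_mem_nhdsWithin, ?_⟩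
  rintro y ⟨hyb, hyΔ, hyi⟩
  set p : ℝ → (Fin n → ℝ) := fun t => x + t • (y - x) with hp
  have hxb : x ∈ Metric.ball x ε := Metric.mem_ball_self hε
  have hpball : ∀ t ∈ Set.Icc (0:ℝ) 1, p t ∈ Metric.ball x ε := fun t ht =>
    (convex_ball x ε).add_smul_sub_mem hxb hyb ht
  have hpi : ∀ t, p t i = 0 := by
    intro t
    simp [hp, hxi, hyi]
  have hpΔ : ∀ t ∈ Set.Icc (0:ℝ) 1, p t ∈ Δ := by
    intro t ht
    rw [hΔ]
    refine ⟨hball (hpball t ht), fun j hj => ?_⟩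
    have hxj : 0 ≤ x j := by rw [hΔ] at hx; exact hx.2 j hj
    have hyj : 0 ≤ y j := by rw [hΔ] at hyΔ; exact hyΔ.2 j hj
    have : p t j = x j + t * (y j - x j) := by simp [hp]
    rw [this]
    nlinarith [ht.1, ht.2]
  -- derivative of g i i along the segment is zero
  have hderiv : ∀ t ∈ Set.Icc (0:ℝ) 1, HasDerivAt (fun t => g i i (p t)) 0 t := by
    intro t ht
    have hpd : HasDerivAt p (y - x) t := by
      have h1 : HasDerivAt (fun t : ℝ => t • (y - x)) ((1:ℝ) • (y - x)) t :=
        (hasDerivAt_id t).smul_const (y - x)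
      simpa [hp, one_smul] using h1.const_add x
    have hdiff : DifferentiableAt ℝ (g i i) (p t) :=
      ((hsmooth i i).differentiableOn (by simp)).differentiableAt
        (hU.mem_nhds (hball (hpball t ht)))
    have hcomp := hdiff.hasFDerivAt.comp_hasDerivAt t hpd
    have hzero : fderiv ℝ (g i i) (p t) (y - x) = 0 := by
      have hv : (y - x) = ∑ j : Fin n, (y j - x j) • (Pi.single j 1 : Fin n → ℝ) := by
        funext l
        simp [Pi.single_apply, Finset.sum_ite_eq', mul_comm]
      rw [hv, map_sum]
      refine Finset.sum_eq_zero fun j _ => ?_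
      rw [map_smul, smul_eq_mul]
      by_cases hji : j = i
      · subst hji
        simp [hxi, hyi]
      · rw [heq1 i j hi (fun h => hji h.symm) (p t) (hpΔ t ht), hpi t, zero_mul, mul_zero]
    rw [hzero] at hcomp
    exact hcomp
  have hcont : ContinuousOn (fun t => g i i (p t)) (Set.Icc (0:ℝ) 1) := by
    exact fun t ht => ((hderiv t ht).continuousAt).continuousWithinAt
  have := constant_of_has_deriv_right_zero hcont
    (fun t ht => ((hderiv t (Set.Ico_subset_Icc_self ht)).hasDerivWithinAt))
  have h1 := this 1 (by norm_num)
  have hp1 : p 1 = y := by simp [hp]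
  have hp0 : p 0 = x := by simp [hp]
  rw [hp1, hp0] at h1
  exact h1
end

section
/- Let $(M, g)$ be an $n$-dimensional Riemannian manifold with a flat torsion-free connection $\nabla$ such that $g$ is Hessian ($d^\nabla g^\flat = 0$). For parallel 1-forms $\alpha, \beta$ (i.e. $\nabla\alpha = \nabla\beta = 0$), the vector fields $g^\sharp(\alpha)$ and $g^\sharp(\beta)$ commute: $[g^\sharp(\alpha), g^\sharp(\beta)] = 0$. -/
open Matrix Finset

private lemma diffAt_prod {n : ℕ} {x : Fin n → ℝ} {ι : Type*} (s : Finset ι)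
    (f : ι → (Fin n → ℝ) → ℝ) (h : ∀ i ∈ s, DifferentiableAt ℝ (f i) x) :
    DifferentiableAt ℝ (fun y => ∏ i ∈ s, f i y) x := by
  classical
  induction s using Finset.induction_on with
  | empty => simpa using differentiableAt_const (1 : ℝ)
  | insert _ _ hni ih =>
    simp only [Finset.prod_insert hni]
    exact (h _ (Finset.mem_insert_self _ _)).mul
      (ih fun i hi => h i (Finset.mem_insert_of_mem hi))

private lemma diffAt_det {n : ℕ} {x : Fin n → ℝ}
    {A : (Fin n → ℝ) → Matrix (Fin n) (Fin n) ℝ}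
    (h : ∀ i j, DifferentiableAt ℝ (fun y => A y i j) x) :
    DifferentiableAt ℝ (fun y => (A y).det) x := by
  simp only [Matrix.det_apply, Units.smul_def, zsmul_eq_mul]
  exact DifferentiableAt.fun_sum fun σ _ =>
    (differentiableAt_const _).mul (diffAt_prod _ _ fun i _ => h _ _)

private lemma diffAt_inv {n : ℕ} {x : Fin n → ℝ}
    {A : (Fin n → ℝ) → Matrix (Fin n) (Fin n) ℝ}
    (h : ∀ i j, DifferentiableAt ℝ (fun y => A y i j) x)
    (hdet : (A x).det ≠ 0) (i j : Fin n) :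
    DifferentiableAt ℝ (fun y => (A y)⁻¹ i j) x := by
  have hadj : DifferentiableAt ℝ (fun y => (A y).adjugate i j) x := by
    simp only [Matrix.adjugate_apply]
    apply diffAt_det
    intro k l
    rcases eq_or_ne k j with hk | hk
    · simp only [Matrix.updateRow_apply, if_pos hk]
      exact differentiableAt_const _
    · simp only [Matrix.updateRow_apply, if_neg hk]
      exact h _ _
  have heq : (fun y => (A y)⁻¹ i j) = fun y => ((A y).det)⁻¹ * (A y).adjugate i j := by
    funext y
    rw [Matrix.inv_def, Matrix.smul_apply, Ring.inverse_eq_inv', smul_eq_mul]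
  rw [heq]
  exact ((diffAt_det h).inv hdet).mul hadj

private lemma alg_lemma {n : ℕ} (G : Matrix (Fin n) (Fin n) ℝ)
    (D : Fin n → Fin n → Fin n → ℝ) (Xv Yv : Fin n → ℝ) (DX DY : Fin n → Fin n → ℝ)
    (hsym : ∀ m k j, D m k j = D m j k)
    (hkX : ∀ m j, ∑ k, (D m k j * Xv k + G m k * DX k j) = 0)
    (hkY : ∀ m j, ∑ k, (D m k j * Yv k + G m k * DY k j) = 0) (m : Fin n) :
    ∑ i, G m i * (∑ j, (Xv j * DY i j - Yv j * DX i j)) = 0 := by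
  have hSX : ∀ j, ∑ k, G m k * DX k j = -∑ k, D m k j * Xv k := by
    intro j
    have := hkX m j
    rw [Finset.sum_add_distrib] at this
    linarith
  have hSY : ∀ j, ∑ k, G m k * DY k j = -∑ k, D m k j * Yv k := by
    intro j
    have := hkY m j
    rw [Finset.sum_add_distrib] at this
    linarith
  have step1 : ∑ i, G m i * (∑ j, (Xv j * DY i j - Yv j * DX i j))
      = ∑ j, (Xv j * (∑ i, G m i * DY i j) - Yv j * (∑ i, G m i * DX i j)) := by
    calc ∑ i, G m i * ∑ j, (Xv j * DY i j - Yv j * DX i j)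
        = ∑ i, ∑ j, (Xv j * (G m i * DY i j) - Yv j * (G m i * DX i j)) := by
          refine Finset.sum_congr rfl fun i _ => ?_
          rw [Finset.mul_sum]
          exact Finset.sum_congr rfl fun j _ => by ring
      _ = ∑ j, ∑ i, (Xv j * (G m i * DY i j) - Yv j * (G m i * DX i j)) := Finset.sum_comm
      _ = ∑ j, (Xv j * (∑ i, G m i * DY i j) - Yv j * (∑ i, G m i * DX i j)) := by
          refine Finset.sum_congr rfl fun j _ => ?_
          rw [Finset.mul_sum, Finset.mul_sum, ← Finset.sum_sub_distrib]
  rw [step1]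
  simp only [hSX, hSY]
  have key : ∑ j, ∑ k, D m k j * Yv k * Xv j = ∑ j, ∑ k, D m k j * Xv k * Yv j := by
    calc ∑ j, ∑ k, D m k j * Yv k * Xv j
        = ∑ j, ∑ k, D m j k * Yv k * Xv j :=
          Finset.sum_congr rfl fun j _ => Finset.sum_congr rfl fun k _ => by rw [hsym]
      _ = ∑ k, ∑ j, D m j k * Yv k * Xv j := Finset.sum_comm
      _ = ∑ j, ∑ k, D m k j * Xv k * Yv j :=
          Finset.sum_congr rfl fun j _ => Finset.sum_congr rfl fun k _ => by ring
  calc ∑ j, (Xv j * -∑ k, D m k j * Yv k - Yv j * -∑ k, D m k j * Xv k)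
      = ∑ j, ((∑ k, D m k j * Xv k * Yv j) - ∑ k, D m k j * Yv k * Xv j) := by
        refine Finset.sum_congr rfl fun j _ => ?_
        rw [show (∑ k, D m k j * Xv k * Yv j) = (∑ k, D m k j * Xv k) * Yv j from
            (Finset.sum_mul _ _ _).symm,
          show (∑ k, D m k j * Yv k * Xv j) = (∑ k, D m k j * Yv k) * Xv j from
            (Finset.sum_mul _ _ _).symm]
        ring
    _ = (∑ j, ∑ k, D m k j * Xv k * Yv j) - ∑ j, ∑ k, D m k j * Yv k * Xv j :=
        Finset.sum_sub_distrib _ _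
    _ = 0 := by rw [key, sub_self]

/-- on an affine chart of a Hessian manifold (flat coordinates on an open
`U ⊆ ℝⁿ`, metric matrix `g`, Hessian condition `∂_l g_{ij} = ∂_j g_{il}`), the metric
duals `X = g^♯(α)`, `Y = g^♯(β)` of parallel (constant-coefficient) 1-forms `α = Σ aⱼ dxʲ`,
`β = Σ bⱼ dxʲ` commute: `[X, Y] = 0`. -/
theorem stmt_13 (n : ℕ) (U : Set (Fin n → ℝ)) (hU : IsOpen U)
    (g : (Fin n → ℝ) → Matrix (Fin n) (Fin n) ℝ)
    (hsmooth : ∀ i j, ContDiffOn ℝ (⊤ : ℕ∞) (fun x => g x i j) U)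
    (hpos : ∀ x ∈ U, (g x).PosDef)
    (hhess : ∀ x ∈ U, ∀ i j l : Fin n,
      fderiv ℝ (fun y => g y i j) x (Pi.single l 1)
        = fderiv ℝ (fun y => g y i l) x (Pi.single j 1))
    (a b : Fin n → ℝ)
    (X Y : (Fin n → ℝ) → Fin n → ℝ)
    (hX : ∀ x i, X x i = ∑ j, (g x)⁻¹ i j * a j)
    (hY : ∀ x i, Y x i = ∑ j, (g x)⁻¹ i j * b j) :
    ∀ x ∈ U, ∀ i : Fin n,
      (∑ j, (X x j * fderiv ℝ (fun y => Y y i) x (Pi.single j 1)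
        - Y x j * fderiv ℝ (fun y => X y i) x (Pi.single j 1))) = 0 := by
  intro x hx i
  have hdet' : ∀ y ∈ U, (g y).det ≠ 0 := fun y hy => (hpos y hy).det_pos.ne'
  have hgd : ∀ y ∈ U, ∀ i j, DifferentiableAt ℝ (fun z => g z i j) y := fun y hy i j =>
    ((hsmooth i j).contDiffAt (hU.mem_nhds hy)).differentiableAt (by simp)
  -- key identity from differentiating g · W = const
  have key : ∀ (W : (Fin n → ℝ) → Fin n → ℝ) (c : Fin n → ℝ),
      (∀ z k, W z k = ∑ j, (g z)⁻¹ k j * c j) →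
      ∀ m j, ∑ k, (fderiv ℝ (fun z => g z m k) x (Pi.single j 1) * W x k
        + g x m k * fderiv ℝ (fun z => W z k) x (Pi.single j 1)) = 0 := by
    intro W c hW m j
    have hWd : ∀ y ∈ U, ∀ k, DifferentiableAt ℝ (fun z => W z k) y := by
      intro y hy k
      have heq : (fun z => W z k) = fun z => ∑ j, (g z)⁻¹ k j * c j :=
        funext fun z => hW z k
      rw [heq]
      exact DifferentiableAt.fun_sum fun j _ =>
        (diffAt_inv (hgd y hy) (hdet' y hy) k j).mul_const _
    have hconst : (fun z => ∑ k, g z m k * W z k) =ᶠ[nhds x] fun _ => c m := by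
      filter_upwards [hU.mem_nhds hx] with y hy
      have hinv : g y * (g y)⁻¹ = 1 := Matrix.mul_nonsing_inv _ (hdet' y hy).isUnit
      calc ∑ k, g y m k * W y k
          = ∑ k, ∑ j, g y m k * ((g y)⁻¹ k j * c j) := by
            refine Finset.sum_congr rfl fun k _ => ?_
            rw [hW y k, Finset.mul_sum]
        _ = ∑ j, (∑ k, g y m k * (g y)⁻¹ k j) * c j := by
            rw [Finset.sum_comm]
            refine Finset.sum_congr rfl fun j _ => ?_
            rw [Finset.sum_mul]
            exact Finset.sum_congr rfl fun k _ => by ring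
        _ = ∑ j, (g y * (g y)⁻¹) m j * c j := by
            simp [Matrix.mul_apply]
        _ = c m := by
            rw [hinv]
            simp [Matrix.one_apply]
    have h0 : fderiv ℝ (fun z => ∑ k, g z m k * W z k) x = 0 := by
      rw [hconst.fderiv_eq]
      exact fderiv_const_apply _
    have hsum : fderiv ℝ (fun z => ∑ k, g z m k * W z k) x
        = ∑ k, fderiv ℝ (fun z => g z m k * W z k) x :=
      fderiv_fun_sum fun k _ => (hgd x hx m k).mul (hWd x hx k)
    have h1 : ∑ k, (fderiv ℝ (fun z => g z m k * W z k) x) (Pi.single j 1) = 0 := by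
      rw [← ContinuousLinearMap.sum_apply, ← hsum, h0]
      rfl
    have h2 : ∀ k, (fderiv ℝ (fun z => g z m k * W z k) x) (Pi.single j 1)
        = fderiv ℝ (fun z => g z m k) x (Pi.single j 1) * W x k
          + g x m k * fderiv ℝ (fun z => W z k) x (Pi.single j 1) := by
      intro k
      rw [fderiv_fun_mul (hgd x hx m k) (hWd x hx k)]
      simp only [ContinuousLinearMap.add_apply, ContinuousLinearMap.smul_apply, smul_eq_mul]
      ring
    rw [← h1]
    exact Finset.sum_congr rfl fun k _ => (h2 k).symm
  -- apply the algebraic lemma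
  set v : Fin n → ℝ := fun i => ∑ j, (X x j * fderiv ℝ (fun y => Y y i) x (Pi.single j 1)
    - Y x j * fderiv ℝ (fun y => X y i) x (Pi.single j 1)) with hv
  have hgv : ∀ m, ∑ i, g x m i * v i = 0 := by
    intro m
    exact alg_lemma (g x)
      (fun m k j => fderiv ℝ (fun z => g z m k) x (Pi.single j 1))
      (X x) (Y x)
      (fun k j => fderiv ℝ (fun z => X z k) x (Pi.single j 1))
      (fun k j => fderiv ℝ (fun z => Y z k) x (Pi.single j 1))
      (fun m k j => hhess x hx m k j)
      (fun m j => key X a hX m j)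
      (fun m j => key Y b hY m j) m
  have hmul : (g x).mulVec v = 0 := by
    funext m
    simpa [Matrix.mulVec, dotProduct] using hgv m
  have hveq : v = 0 := by
    have h3 := congrArg (fun w => ((g x)⁻¹).mulVec w) hmul
    simpa [Matrix.mulVec_mulVec, Matrix.nonsing_inv_mul _ (hdet' x hx).isUnit,
      Matrix.one_mulVec, Matrix.mulVec_zero] using h3
  exact congrFun hveq i
end

section
/- In local Hessian coordinates, let $g_{ij} = \partial^2\phi/\partial x^i \partial x^j$ be a smooth positive-definite matrix-valued function on an open $U \subset \mathbb{R}^n$, with inverse matrix $(g^{jk})$. Then the first Koszul form $\alpha = \frac{1}{2}\sum_j \frac{\partial \log \det(g)}{\partial x^j} dx^j$ satisfies $\mathrm{div}(g^\sharp(\alpha)) = -\frac{1}{2}\sum_{j,k} \frac{\partial^2 g^{jk}}{\partial x^j \partial x^k}$, where the divergence is taken with respect to the Euclidean volume and $g^\sharp(\alpha) = \sum_{j,k} g^{jk}\alpha_j \partial_{x^k}$. -/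
noncomputable def detCML (n : ℕ) : ContinuousMultilinearMap ℝ (fun _ : Fin n => (Fin n → ℝ)) ℝ :=
  MultilinearMap.mkContinuous
    ((Matrix.detRowAlternating : ((Fin n → ℝ) [⋀^Fin n]→ₗ[ℝ] ℝ)).toMultilinearMap)
    (Nat.factorial n) (by
      intro m
      have h1 : (Matrix.detRowAlternating (R := ℝ) (n := Fin n)).toMultilinearMap m
          = Matrix.det (Matrix.of m) := rfl
      rw [h1, Matrix.det_apply]
      calc ‖∑ σ : Equiv.Perm (Fin n), Equiv.Perm.sign σ • ∏ i, Matrix.of m (σ i) i‖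
          ≤ ∑ σ : Equiv.Perm (Fin n), ‖Equiv.Perm.sign σ • ∏ i, Matrix.of m (σ i) i‖ :=
            norm_sum_le _ _
        _ ≤ ∑ σ : Equiv.Perm (Fin n), ∏ i, ‖m i‖ := by
            apply Finset.sum_le_sum
            intro σ _
            have : ‖Equiv.Perm.sign σ • ∏ i, Matrix.of m (σ i) i‖
                = ‖∏ i, Matrix.of m (σ i) i‖ := by
              rcases Int.units_eq_one_or (Equiv.Perm.sign σ) with h | h <;> simp [h]
            rw [this]
            have h2 : ‖∏ i, Matrix.of m (σ i) i‖ ≤ ∏ i, ‖m (σ i)‖ := by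
              rw [norm_prod]
              apply Finset.prod_le_prod (fun i _ => norm_nonneg _)
              intro i _
              exact norm_le_pi_norm (m (σ i)) i
            calc ‖∏ i, Matrix.of m (σ i) i‖ ≤ ∏ i, ‖m (σ i)‖ := h2
              _ = ∏ i, ‖m i‖ := Equiv.prod_comp σ (fun i => ‖m i‖)
        _ = (Nat.factorial n) * ∏ i, ‖m i‖ := by
            rw [Finset.sum_const, Finset.card_univ, Fintype.card_perm, Fintype.card_fin,
              nsmul_eq_mul]
      )

lemma det_updateRow_eq (n : ℕ) (A : Matrix (Fin n) (Fin n) ℝ) (i : Fin n) (v : Fin n → ℝ) :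
    (A.updateRow i v).det = ∑ j, v j * A.adjugate j i := by
  rw [← Matrix.cramer_transpose_apply]
  have hv : v = ∑ j : Fin n, v j • (Pi.single j 1 : Fin n → ℝ) := by
    funext k
    simp [Pi.single_apply, Finset.sum_apply]
  conv_lhs => rw [hv, map_sum]
  simp [Matrix.adjugate_def, Finset.sum_apply, mul_comm]

lemma hasFDerivAt_det_comp {n : ℕ} {G : (Fin n → ℝ) → Matrix (Fin n) (Fin n) ℝ}
    {x : Fin n → ℝ} (h : ∀ i j, DifferentiableAt ℝ (fun y => G y i j) x) :
    HasFDerivAt (fun y => (G y).det)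
      (∑ i : Fin n, ∑ j : Fin n, ((G x).adjugate j i) • fderiv ℝ (fun y => G y i j) x) x := by
  have H := HasFDerivAt.multilinear_comp (f := detCML n) (g := fun i y => G y i)
    (g' := fun i => ContinuousLinearMap.pi (fun j => fderiv ℝ (fun y => G y i j) x)) (x := x)
    (fun i => hasFDerivAt_pi.2 (fun j => (h i j).hasFDerivAt))
  refine H.congr_fderiv (Eq.symm ?_)
  ext v
  simp only [ContinuousLinearMap.coe_sum', Finset.sum_apply, ContinuousLinearMap.coe_comp',
    Function.comp_apply, ContinuousLinearMap.coe_smul', Pi.smul_apply, smul_eq_mul]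
  refine Finset.sum_congr rfl (fun i _ => ?_)
  have : (detCML n).toContinuousLinearMap (fun j => G x j) i
      ((ContinuousLinearMap.pi fun j => fderiv ℝ (fun y => G y i j) x) v)
      = (Matrix.updateRow (G x) i (fun j => fderiv ℝ (fun y => G y i j) x v)).det := by
    rfl
  rw [this, det_updateRow_eq]
  simp [mul_comm]

lemma contDiffOn_det_comp {n : ℕ} {m : WithTop ℕ∞} {U : Set (Fin n → ℝ)}
    {G : (Fin n → ℝ) → Matrix (Fin n) (Fin n) ℝ}
    (h : ∀ i j, ContDiffOn ℝ m (fun y => G y i j) U) :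
    ContDiffOn ℝ m (fun y => (G y).det) U := by
  have : ContDiffOn ℝ m (fun y => detCML n (fun i => G y i)) U :=
    (detCML n).contDiff.comp_contDiffOn
      (contDiffOn_pi.2 fun i => contDiffOn_pi.2 fun j => h i j)
  exact this

variable {E : Type*} [NormedAddCommGroup E] [NormedSpace ℝ E]

lemma fderiv_fderiv_apply {f : E → ℝ} {y : E} (v w : E)
    (hf : DifferentiableAt ℝ (fderiv ℝ f) y) :
    fderiv ℝ (fun z => fderiv ℝ f z w) y v = fderiv ℝ (fderiv ℝ f) y v w := by
  rw [fderiv_clm_apply hf (differentiableAt_const w)]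
  simp

lemma sym_second {f : E → ℝ} {y : E} (v w : E) (hf : ContDiffAt ℝ (⊤ : ℕ∞) f y) :
    fderiv ℝ (fun z => fderiv ℝ f z w) y v = fderiv ℝ (fun z => fderiv ℝ f z v) y w := by
  have hd : DifferentiableAt ℝ (fderiv ℝ f) y :=
    (hf.fderiv_right (m := (⊤ : ℕ∞)) (by simp)).differentiableAt (by simp)
  rw [fderiv_fderiv_apply v w hd, fderiv_fderiv_apply w v hd,
    (hf.isSymmSndFDerivAt (by rw [minSmoothness_of_isRCLikeNormedField]; exact WithTop.coe_le_coe.2 le_top)).eq]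

open Matrix Filter Topology

/-- in local Hessian coordinates, with `g_{ij} = ∂²φ/∂xⁱ∂xʲ` positive
definite and first Koszul form `α = ½ d log det(g)`, one has
`div(g^♯ α) = -(1/2) Σ_{j,k} ∂²g^{jk}/∂xʲ∂xᵏ` (Euclidean divergence). -/
theorem stmt_14 (n : ℕ) (U : Set (Fin n → ℝ)) (hU : IsOpen U)
    (φ : (Fin n → ℝ) → ℝ) (hφ : ContDiffOn ℝ (⊤ : ℕ∞) φ U)
    (g : (Fin n → ℝ) → Matrix (Fin n) (Fin n) ℝ)
    (hg : ∀ x ∈ U, ∀ i j : Fin n, g x i j =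
      fderiv ℝ (fun y => fderiv ℝ φ y (Pi.single j 1)) x (Pi.single i 1))
    (hpos : ∀ x ∈ U, (g x).PosDef)
    (α : (Fin n → ℝ) → Fin n → ℝ)
    (hα : ∀ x ∈ U, ∀ j : Fin n,
      α x j = (1 / 2) * fderiv ℝ (fun y => Real.log (g y).det) x (Pi.single j 1)) :
    ∀ x ∈ U,
      (∑ l : Fin n,
        fderiv ℝ (fun y => ∑ j : Fin n, (g y)⁻¹ j l * α y j) x (Pi.single l 1))
      = -(1 / 2) * ∑ j : Fin n, ∑ l : Fin n,
          fderiv ℝ (fun y =>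
            fderiv ℝ (fun z => (g z)⁻¹ j l) y (Pi.single l 1)) x (Pi.single j 1) := by
  have hmem : ∀ {y : Fin n → ℝ}, y ∈ U → U ∈ 𝓝 y := fun hy => hU.mem_nhds hy
  have hφ2 : ∀ b : Fin n, ContDiffOn ℝ (⊤ : ℕ∞) (fun z => fderiv ℝ φ z (Pi.single b 1)) U :=
    fun b => (hφ.fderiv_of_isOpen hU (by simp)).clm_apply contDiffOn_const
  have hgc : ∀ i j, ContDiffOn ℝ (⊤ : ℕ∞) (fun y => g y i j) U := by
    intro i j
    have h : ContDiffOn ℝ (⊤ : ℕ∞)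
        (fun y => fderiv ℝ (fun z => fderiv ℝ φ z (Pi.single j 1)) y (Pi.single i 1)) U :=
      ((hφ2 j).fderiv_of_isOpen hU (by simp)).clm_apply contDiffOn_const
    exact h.congr (fun y hy => hg y hy i j)
  have hne : ∀ y ∈ U, (g y).det ≠ 0 := fun y hy => ne_of_gt (hpos y hy).det_pos
  have hdetc : ContDiffOn ℝ (⊤ : ℕ∞) (fun y => (g y).det) U := contDiffOn_det_comp hgc
  have hadjc : ∀ k i, ContDiffOn ℝ (⊤ : ℕ∞) (fun y => (g y).adjugate k i) U := by
    intro k i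
    have h2 : ∀ a b, ContDiffOn ℝ (⊤ : ℕ∞)
        (fun y => ((g y).updateRow i (Pi.single k 1)) a b) U := by
      intro a b
      simp only [Matrix.updateRow_apply]
      split_ifs with hai
      · exact contDiffOn_const
      · exact hgc a b
    exact (contDiffOn_det_comp h2).congr (fun y hy => Matrix.adjugate_apply (g y) k i)
  have hinv_eq : ∀ (A : Matrix (Fin n) (Fin n) ℝ) (k i : Fin n),
      A⁻¹ k i = (A.det)⁻¹ * A.adjugate k i := by
    intro A k i
    rw [Matrix.inv_def]
    simp [Ring.inverse_eq_inv']
  have hinvc : ∀ k i, ContDiffOn ℝ (⊤ : ℕ∞) (fun y => (g y)⁻¹ k i) U := fun k i =>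
    ContDiffOn.congr ((hdetc.inv hne).mul (hadjc k i)) (fun y hy => hinv_eq (g y) k i)
  have hgd : ∀ y ∈ U, ∀ i j, DifferentiableAt ℝ (fun z => g z i j) y :=
    fun y hy i j => ((hgc i j).contDiffAt (hmem hy)).differentiableAt (by simp)
  have hinvd : ∀ y ∈ U, ∀ i j, DifferentiableAt ℝ (fun z => (g z)⁻¹ i j) y :=
    fun y hy i j => ((hinvc i j).contDiffAt (hmem hy)).differentiableAt (by simp)
  -- derivative of log det
  have hlog : ∀ y ∈ U, ∀ v, fderiv ℝ (fun z => Real.log (g z).det) y v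
      = ∑ a, ∑ b, (g y)⁻¹ b a * fderiv ℝ (fun z => g z a b) y v := by
    intro y hy v
    have hdet := hasFDerivAt_det_comp (G := g) (x := y) (fun i j => hgd y hy i j)
    have hl := hdet.log (hne y hy)
    rw [hl.fderiv]
    simp only [ContinuousLinearMap.smul_apply, ContinuousLinearMap.coe_sum',
      Finset.sum_apply, ContinuousLinearMap.coe_smul', Pi.smul_apply, smul_eq_mul,
      Finset.mul_sum]
    refine Finset.sum_congr rfl fun a _ => Finset.sum_congr rfl fun b _ => ?_
    rw [hinv_eq]; ring
  have hαf : ∀ y ∈ U, ∀ j, α y j = (1/2) * ∑ a, ∑ b,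
      (g y)⁻¹ b a * fderiv ℝ (fun z => g z a b) y (Pi.single j 1) := by
    intro y hy j
    rw [hα y hy j, hlog y hy]
  -- symmetry of g
  have hgsym : ∀ y ∈ U, ∀ i j, g y i j = g y j i := by
    intro y hy i j
    rw [hg y hy i j, hg y hy j i]
    exact sym_second _ _ (hφ.contDiffAt (hmem hy))
  -- third derivative symmetry
  have hsym3 : ∀ y ∈ U, ∀ a b j, fderiv ℝ (fun z => g z a b) y (Pi.single j 1)
      = fderiv ℝ (fun z => g z j b) y (Pi.single a 1) := by
    intro y hy a b j
    have hev : ∀ (i : Fin n), (fun z => g z i b) =ᶠ[𝓝 y]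
        (fun z => fderiv ℝ (fun w => fderiv ℝ φ w (Pi.single b 1)) z (Pi.single i 1)) := by
      intro i
      filter_upwards [hmem hy] with z hz
      exact hg z hz i b
    rw [(hev a).fderiv_eq, (hev j).fderiv_eq]
    exact sym_second _ _ ((hφ2 b).contDiffAt (hmem hy))
  have hdsym : ∀ y ∈ U, ∀ a b, fderiv ℝ (fun z => g z a b) y
      = fderiv ℝ (fun z => g z b a) y := by
    intro y hy a b
    apply Filter.EventuallyEq.fderiv_eq
    filter_upwards [hmem hy] with z hz
    exact hgsym z hz a b
  have hinvsym : ∀ y ∈ U, ∀ k i, (g y)⁻¹ k i = (g y)⁻¹ i k := by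
    intro y hy k i
    have hT : (g y)ᵀ = g y := Matrix.ext fun a b => hgsym y hy b a
    have h2 : ((g y)⁻¹)ᵀ = (g y)⁻¹ := by
      rw [Matrix.transpose_nonsing_inv, hT]
    calc (g y)⁻¹ k i = ((g y)⁻¹)ᵀ i k := rfl
      _ = (g y)⁻¹ i k := by rw [h2]
  -- derivative of the inverse matrix entries
  have hdinv : ∀ y ∈ U, ∀ j l (v : Fin n → ℝ),
      fderiv ℝ (fun z => (g z)⁻¹ j l) y v
        = -∑ a, ∑ b, (g y)⁻¹ j a * fderiv ℝ (fun z => g z a b) y v * (g y)⁻¹ b l := by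
    intro y hy j l v
    have hstep : ∀ c : Fin n, ∑ k, fderiv ℝ (fun z => (g z)⁻¹ j k) y v * g y k c
        = -∑ k, (g y)⁻¹ j k * fderiv ℝ (fun z => g z k c) y v := by
      intro c
      have hconst : (fun z => ∑ k, (g z)⁻¹ j k * g z k c) =ᶠ[𝓝 y]
          (fun _ => (1 : Matrix (Fin n) (Fin n) ℝ) j c) := by
        filter_upwards [hmem hy] with z hz
        have h1 : ((g z)⁻¹ * g z) = 1 :=
          Matrix.nonsing_inv_mul _ (isUnit_iff_ne_zero.2 (hne z hz))
        calc ∑ k, (g z)⁻¹ j k * g z k c = ((g z)⁻¹ * g z) j c := (Matrix.mul_apply).symm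
          _ = (1 : Matrix (Fin n) (Fin n) ℝ) j c := by rw [h1]
      have h0 : fderiv ℝ (fun z => ∑ k, (g z)⁻¹ j k * g z k c) y = 0 := by
        rw [hconst.fderiv_eq]; exact fderiv_const_apply _
      have hsum : fderiv ℝ (fun z => ∑ k, (g z)⁻¹ j k * g z k c) y
          = ∑ k, fderiv ℝ (fun z => (g z)⁻¹ j k * g z k c) y :=
        fderiv_fun_sum (fun k _ => (hinvd y hy j k).mul (hgd y hy k c))
      have h0v : (0:ℝ) = ∑ k, (fderiv ℝ (fun z => (g z)⁻¹ j k) y v * g y k c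
          + (g y)⁻¹ j k * fderiv ℝ (fun z => g z k c) y v) := by
        have e1 : (0:ℝ) = (∑ k, fderiv ℝ (fun z => (g z)⁻¹ j k * g z k c) y) v := by
          rw [← hsum, h0]; simp
        rw [e1]
        rw [ContinuousLinearMap.coe_sum', Finset.sum_apply]
        refine Finset.sum_congr rfl fun k _ => ?_
        rw [fderiv_fun_mul (hinvd y hy j k) (hgd y hy k c)]
        simp only [ContinuousLinearMap.add_apply, ContinuousLinearMap.coe_smul',
          Pi.smul_apply, smul_eq_mul]
        ring
      rw [Finset.sum_add_distrib] at h0v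
      linarith
    have hgmul : ∀ k : Fin n, (∑ c, g y k c * (g y)⁻¹ c l)
        = (1 : Matrix (Fin n) (Fin n) ℝ) k l := by
      intro k
      have h1 : (g y * (g y)⁻¹) = 1 :=
        Matrix.mul_nonsing_inv _ (isUnit_iff_ne_zero.2 (hne y hy))
      calc ∑ c, g y k c * (g y)⁻¹ c l = (g y * (g y)⁻¹) k l := (Matrix.mul_apply).symm
        _ = _ := by rw [h1]
    calc fderiv ℝ (fun z => (g z)⁻¹ j l) y v
        = ∑ k, fderiv ℝ (fun z => (g z)⁻¹ j k) y v
            * (1 : Matrix (Fin n) (Fin n) ℝ) k l := by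
          rw [Finset.sum_eq_single l]
          · simp [Matrix.one_apply]
          · intro k _ hk; simp [Matrix.one_apply, hk]
          · intro h; exact absurd (Finset.mem_univ l) h
      _ = ∑ k, fderiv ℝ (fun z => (g z)⁻¹ j k) y v * ∑ c, g y k c * (g y)⁻¹ c l := by
          refine Finset.sum_congr rfl fun k _ => ?_
          rw [hgmul k]
      _ = ∑ c, (∑ k, fderiv ℝ (fun z => (g z)⁻¹ j k) y v * g y k c) * (g y)⁻¹ c l := by
          simp_rw [Finset.mul_sum, Finset.sum_mul]
          rw [Finset.sum_comm]
          refine Finset.sum_congr rfl fun k _ => Finset.sum_congr rfl fun c _ => ?_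
          ring
      _ = ∑ c, (-∑ k, (g y)⁻¹ j k * fderiv ℝ (fun z => g z k c) y v) * (g y)⁻¹ c l := by
          refine Finset.sum_congr rfl fun c _ => ?_
          rw [hstep c]
      _ = ∑ c, ∑ k, -((g y)⁻¹ j k * fderiv ℝ (fun z => g z k c) y v * (g y)⁻¹ c l) := by
          refine Finset.sum_congr rfl fun c _ => ?_
          rw [neg_mul, Finset.sum_mul, ← Finset.sum_neg_distrib]
      _ = ∑ k, ∑ c, -((g y)⁻¹ j k * fderiv ℝ (fun z => g z k c) y v * (g y)⁻¹ c l) :=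
          Finset.sum_comm
      _ = -∑ a, ∑ b, (g y)⁻¹ j a * fderiv ℝ (fun z => g z a b) y v * (g y)⁻¹ b l := by
          rw [← Finset.sum_neg_distrib]
          exact Finset.sum_congr rfl fun a _ => Finset.sum_neg_distrib _
  -- the core pointwise identity
  have hcore : ∀ y ∈ U, ∀ l, (∑ j, (g y)⁻¹ j l * α y j)
      = -(1/2) * ∑ j, fderiv ℝ (fun z => (g z)⁻¹ j l) y (Pi.single j 1) := by
    intro y hy l
    have lhs_eq : (∑ j, (g y)⁻¹ j l * α y j)
        = (1/2) * ∑ j, ∑ a, ∑ b, (g y)⁻¹ j l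
            * ((g y)⁻¹ b a * fderiv ℝ (fun z => g z a b) y (Pi.single j 1)) := by
      calc (∑ j, (g y)⁻¹ j l * α y j)
          = ∑ j, (g y)⁻¹ j l * ((1/2) * ∑ a, ∑ b,
              (g y)⁻¹ b a * fderiv ℝ (fun z => g z a b) y (Pi.single j 1)) :=
            Finset.sum_congr rfl fun j _ => by rw [hαf y hy j]
        _ = (1/2) * ∑ j, ∑ a, ∑ b, (g y)⁻¹ j l
            * ((g y)⁻¹ b a * fderiv ℝ (fun z => g z a b) y (Pi.single j 1)) := by
            simp only [Finset.mul_sum]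
            exact Finset.sum_congr rfl fun j _ => Finset.sum_congr rfl fun a _ =>
              Finset.sum_congr rfl fun b _ => by ring
    have rhs_eq : (-(1/2) * ∑ j, fderiv ℝ (fun z => (g z)⁻¹ j l) y (Pi.single j 1))
        = (1/2) * ∑ j, ∑ a, ∑ b, (g y)⁻¹ j a
            * fderiv ℝ (fun z => g z a b) y (Pi.single j 1) * (g y)⁻¹ b l := by
      calc -(1/2) * ∑ j, fderiv ℝ (fun z => (g z)⁻¹ j l) y (Pi.single j 1)
          = -(1/2) * ∑ j, -(∑ a, ∑ b, (g y)⁻¹ j a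
              * fderiv ℝ (fun z => g z a b) y (Pi.single j 1) * (g y)⁻¹ b l) := by
            refine congrArg _ (Finset.sum_congr rfl fun j _ => ?_)
            rw [hdinv y hy j l (Pi.single j 1)]
        _ = (1/2) * ∑ j, ∑ a, ∑ b, (g y)⁻¹ j a
            * fderiv ℝ (fun z => g z a b) y (Pi.single j 1) * (g y)⁻¹ b l := by
            rw [Finset.sum_neg_distrib]
            ring
    rw [lhs_eq, rhs_eq]
    congr 1
    calc ∑ j, ∑ a, ∑ b, (g y)⁻¹ j l
          * ((g y)⁻¹ b a * fderiv ℝ (fun z => g z a b) y (Pi.single j 1))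
        = ∑ j, ∑ a, ∑ b, (g y)⁻¹ j l
          * ((g y)⁻¹ b a * fderiv ℝ (fun z => g z j b) y (Pi.single a 1)) := by
          refine Finset.sum_congr rfl fun j _ => Finset.sum_congr rfl fun a _ =>
            Finset.sum_congr rfl fun b _ => ?_
          rw [hsym3 y hy a b j]
      _ = ∑ a, ∑ j, ∑ b, (g y)⁻¹ j l
          * ((g y)⁻¹ b a * fderiv ℝ (fun z => g z j b) y (Pi.single a 1)) :=
          Finset.sum_comm
      _ = ∑ j, ∑ a, ∑ b, (g y)⁻¹ a l
          * ((g y)⁻¹ j b * fderiv ℝ (fun z => g z a b) y (Pi.single j 1)) := by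
          refine Finset.sum_congr rfl fun j _ => Finset.sum_congr rfl fun a _ =>
            Finset.sum_congr rfl fun b _ => ?_
          rw [hinvsym y hy b j]
      _ = ∑ j, ∑ b, ∑ a, (g y)⁻¹ a l
          * ((g y)⁻¹ j b * fderiv ℝ (fun z => g z a b) y (Pi.single j 1)) := by
          refine Finset.sum_congr rfl fun j _ => Finset.sum_comm
      _ = ∑ j, ∑ a, ∑ b, (g y)⁻¹ b l
          * ((g y)⁻¹ j a * fderiv ℝ (fun z => g z b a) y (Pi.single j 1)) := rfl
      _ = ∑ j, ∑ a, ∑ b, (g y)⁻¹ j a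
          * fderiv ℝ (fun z => g z a b) y (Pi.single j 1) * (g y)⁻¹ b l := by
          refine Finset.sum_congr rfl fun j _ => Finset.sum_congr rfl fun a _ =>
            Finset.sum_congr rfl fun b _ => ?_
          rw [hdsym y hy b a]
          ring
  -- final assembly
  intro x hx
  have hD2 : ∀ (j l : Fin n) (w : Fin n → ℝ),
      DifferentiableAt ℝ (fun y => fderiv ℝ (fun z => (g z)⁻¹ j l) y w) x := by
    intro j l w
    have h1 : ContDiffAt ℝ (⊤ : ℕ∞) (fun z => (g z)⁻¹ j l) x := (hinvc j l).contDiffAt (hmem hx)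
    have h2 : ContDiffAt ℝ (⊤ : ℕ∞) (fderiv ℝ fun z => (g z)⁻¹ j l) x :=
      h1.fderiv_right (m := (⊤ : ℕ∞)) (by simp)
    exact (h2.clm_apply contDiffAt_const).differentiableAt (by simp)
  have hL : ∀ l, fderiv ℝ (fun y => ∑ j, (g y)⁻¹ j l * α y j) x (Pi.single l 1)
      = -(1/2) * ∑ j, fderiv ℝ
          (fun y => fderiv ℝ (fun z => (g z)⁻¹ j l) y (Pi.single j 1)) x (Pi.single l 1) := by
    intro l
    have hev : (fun y => ∑ j, (g y)⁻¹ j l * α y j) =ᶠ[𝓝 x]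
        (fun y => -(1/2) * ∑ j, fderiv ℝ (fun z => (g z)⁻¹ j l) y (Pi.single j 1)) := by
      filter_upwards [hmem hx] with z hz
      exact hcore z hz l
    rw [hev.fderiv_eq]
    rw [fderiv_const_mul (DifferentiableAt.fun_sum fun j _ => hD2 j l _) (-(1/2))]
    rw [ContinuousLinearMap.smul_apply, smul_eq_mul]
    congr 1
    rw [fderiv_fun_sum (fun j _ => hD2 j l _)]
    rw [ContinuousLinearMap.coe_sum', Finset.sum_apply]
  have hswap : ∀ j l, fderiv ℝ
      (fun y => fderiv ℝ (fun z => (g z)⁻¹ j l) y (Pi.single j 1)) x (Pi.single l 1)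
      = fderiv ℝ (fun y => fderiv ℝ (fun z => (g z)⁻¹ j l) y (Pi.single l 1)) x
          (Pi.single j 1) :=
    fun j l => sym_second _ _ ((hinvc j l).contDiffAt (hmem hx))
  calc ∑ l, fderiv ℝ (fun y => ∑ j, (g y)⁻¹ j l * α y j) x (Pi.single l 1)
      = ∑ l, -(1/2) * ∑ j, fderiv ℝ
          (fun y => fderiv ℝ (fun z => (g z)⁻¹ j l) y (Pi.single j 1)) x (Pi.single l 1) :=
        Finset.sum_congr rfl fun l _ => hL l
    _ = -(1/2) * ∑ l, ∑ j, fderiv ℝ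
          (fun y => fderiv ℝ (fun z => (g z)⁻¹ j l) y (Pi.single j 1)) x (Pi.single l 1) := by
        rw [Finset.mul_sum]
    _ = -(1/2) * ∑ j, ∑ l, fderiv ℝ
          (fun y => fderiv ℝ (fun z => (g z)⁻¹ j l) y (Pi.single l 1)) x (Pi.single j 1) := by
        congr 1
        rw [Finset.sum_comm]
        exact Finset.sum_congr rfl fun j _ => Finset.sum_congr rfl fun l _ => hswap j l
end

section
/- Let $\tau(h) = 4\pi(1-h^2)$ on $[-1,1]$ and $b, c \in \mathbb{R}$ with $c > 0$. The metric $G = \left(\frac{1}{\tau(h)} + b^2\tau(h)\right)dh^2 + \tau(h)\,d\phi(d\phi - 2b\,dh) + g_{\mathbb{T}^2}$ on $(\mathbb{T}^2 \times \mathbb{S}^2)$ restricted to $h \in (-1,1)$, where $g_{\mathbb{T}^2} = \frac{1}{c}((a^2+c^2)dx^2 - 2a\,dx\,dy + dy^2)$, is a Riemannian metric (positive definite at every point), and it is compatible with the symplectic form $\omega = dy\wedge dx + d\phi\wedge dh$ in the sense that $G(\cdot,\cdot) = \omega(\cdot, J\cdot)$ for an almost complex structure $J$ determined by $G$ and $\omega$.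 -/
/-!
The metric is the orthogonal sum of a torus block in `(y, x)` and a sphere block in `(φ, h)`,
each a symmetric form `S = !![p, q; q, r]` of determinant `1` on a plane carrying the area form
`Ω`. Completing the square, `p · S(w, w) = (p s + q t)² + (p r - q²) t²`, so `S` is positive
definite as soon as `p > 0`; and `J = Ω⁻¹ S` satisfies `S(·,·) = Ω(·, J ·)` and
`J² = -(p r - q²) = -1`. For the torus block `p = 1/c`, for the sphere block `p = τ(h) > 0`.
-/

open Real

section BinaryForm

variable {p q r : ℝ}

def binaryForm (p q r s t s' t' : ℝ) : ℝ :=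
  p * s * s' + q * (s * t' + t * s') + r * t * t'

theorem mul_binaryForm_self (p q r s t : ℝ) :
    p * binaryForm p q r s t s t = (p * s + q * t) ^ 2 + (p * r - q ^ 2) * t ^ 2 := by
  unfold binaryForm
  ring

theorem binaryForm_self_nonneg (hp : 0 < p) (hdet : 0 ≤ p * r - q ^ 2) (s t : ℝ) :
    0 ≤ binaryForm p q r s t s t := by
  refine (mul_nonneg_iff_of_pos_left hp).mp ?_
  rw [mul_binaryForm_self]
  positivity

theorem binaryForm_self_pos (hp : 0 < p) (hdet : 0 < p * r - q ^ 2) {s t : ℝ}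
    (hst : s ≠ 0 ∨ t ≠ 0) : 0 < binaryForm p q r s t s t := by
  refine pos_of_mul_pos_right ?_ hp.le
  rw [mul_binaryForm_self]
  rcases eq_or_ne t 0 with rfl | ht
  · have hs : s ≠ 0 := hst.resolve_right (not_not.mpr rfl)
    simp only [mul_zero, add_zero, zero_pow two_ne_zero]
    positivity
  · positivity

end BinaryForm

section Block

variable (p₁ q₁ r₁ p₂ q₂ r₂ : ℝ)

def darbouxForm (u v : Fin 4 → ℝ) : ℝ :=
  u 1 * v 0 - u 0 * v 1 + u 2 * v 3 - u 3 * v 2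

def blockForm (u v : Fin 4 → ℝ) : ℝ :=
  binaryForm p₁ q₁ r₁ (u 1) (u 0) (v 1) (v 0) + binaryForm p₂ q₂ r₂ (u 2) (u 3) (v 2) (v 3)

def blockComplexStructure : (Fin 4 → ℝ) →ₗ[ℝ] (Fin 4 → ℝ) :=
  Matrix.toLin' !![q₁, p₁, 0, 0; -r₁, -q₁, 0, 0; 0, 0, -q₂, -r₂; 0, 0, p₂, q₂]

theorem blockComplexStructure_apply (v : Fin 4 → ℝ) :
    blockComplexStructure p₁ q₁ r₁ p₂ q₂ r₂ v =
      ![q₁ * v 0 + p₁ * v 1, -(r₁ * v 0 + q₁ * v 1), -(q₂ * v 2 + r₂ * v 3), p₂ * v 2 + q₂ * v 3] := by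
  ext i
  fin_cases i <;>
    simp only [blockComplexStructure, Matrix.toLin'_apply, Matrix.mulVec, dotProduct,
      Fin.sum_univ_four, Matrix.of_apply, Matrix.cons_val', Matrix.cons_val_fin_one,
      Matrix.cons_val_zero, Matrix.cons_val_one, Matrix.cons_val, Fin.zero_eta, Fin.mk_one,
      Fin.reduceFinMk, Fin.isValue] <;>
    ring

theorem blockForm_eq_darbouxForm (u v : Fin 4 → ℝ) :
    blockForm p₁ q₁ r₁ p₂ q₂ r₂ u v =
      darbouxForm u (blockComplexStructure p₁ q₁ r₁ p₂ q₂ r₂ v) := by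
  simp only [blockForm, binaryForm, darbouxForm, blockComplexStructure_apply,
    Matrix.cons_val_zero, Matrix.cons_val_one, Matrix.cons_val, Fin.isValue]
  ring

variable {p₁ q₁ r₁ p₂ q₂ r₂}

theorem blockComplexStructure_apply_apply (h₁ : p₁ * r₁ - q₁ ^ 2 = 1)
    (h₂ : p₂ * r₂ - q₂ ^ 2 = 1) (u : Fin 4 → ℝ) :
    blockComplexStructure p₁ q₁ r₁ p₂ q₂ r₂ (blockComplexStructure p₁ q₁ r₁ p₂ q₂ r₂ u) = -u := by
  ext i
  fin_cases i <;>
    simp only [blockComplexStructure_apply, Pi.neg_apply, Matrix.cons_val_zero,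
      Matrix.cons_val_one, Matrix.cons_val, Fin.zero_eta, Fin.mk_one, Fin.reduceFinMk, Fin.isValue]
  · linear_combination (-u 0) * h₁
  · linear_combination (-u 1) * h₁
  · linear_combination (-u 2) * h₂
  · linear_combination (-u 3) * h₂

theorem blockForm_self_pos (hp₁ : 0 < p₁) (h₁ : 0 < p₁ * r₁ - q₁ ^ 2) (hp₂ : 0 < p₂)
    (h₂ : 0 < p₂ * r₂ - q₂ ^ 2) {u : Fin 4 → ℝ} (hu : u ≠ 0) :
    0 < blockForm p₁ q₁ r₁ p₂ q₂ r₂ u u := by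
  have hblock : (u 1 ≠ 0 ∨ u 0 ≠ 0) ∨ (u 2 ≠ 0 ∨ u 3 ≠ 0) := by
    by_contra! h0
    exact hu (funext fun i => by fin_cases i <;> simp [h0])
  rcases hblock with hst | hst
  · exact add_pos_of_pos_of_nonneg (binaryForm_self_pos hp₁ h₁ hst)
      (binaryForm_self_nonneg hp₂ h₂.le _ _)
  · exact add_pos_of_nonneg_of_pos (binaryForm_self_nonneg hp₁ h₁.le _ _)
      (binaryForm_self_pos hp₂ h₂ hst)

end Block

/-- for `τ(h) = 4π(1-h²)`, `c > 0`, the metric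
`G = (1/τ + b²τ) dh² + τ dφ(dφ - 2b dh) + g_{T²}` with
`g_{T²} = (1/c)((a²+c²)dx² - 2a dx dy + dy²)` is positive definite for `h ∈ (-1,1)`
(tangent coordinates `(x, y, φ, h)` indexed `0,1,2,3`), and is compatible with the
symplectic form `ω = dy ∧ dx + dφ ∧ dh`: there is an almost complex structure `J` with
`J² = -1` and `G(·,·) = ω(·, J·)`. -/
theorem stmt_19 (a b c : ℝ) (hc : 0 < c) :
    ∀ h : ℝ, h ∈ Set.Ioo (-1 : ℝ) 1 →
      let τ : ℝ := 4 * π * (1 - h ^ 2)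
      let G : (Fin 4 → ℝ) → (Fin 4 → ℝ) → ℝ := fun u v =>
        (1 / τ + b ^ 2 * τ) * u 3 * v 3 + τ * (u 2 * v 2)
          - b * τ * (u 2 * v 3 + u 3 * v 2)
          + (1 / c) * ((a ^ 2 + c ^ 2) * u 0 * v 0
              - a * (u 0 * v 1 + u 1 * v 0) + u 1 * v 1)
      let ω : (Fin 4 → ℝ) → (Fin 4 → ℝ) → ℝ := fun u v =>
        u 1 * v 0 - u 0 * v 1 + u 2 * v 3 - u 3 * v 2
      (∀ u : Fin 4 → ℝ, u ≠ 0 → 0 < G u u) ∧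
      ∃ J : (Fin 4 → ℝ) →ₗ[ℝ] (Fin 4 → ℝ),
        (∀ u, J (J u) = -u) ∧ ∀ u v, G u v = ω u (J v) := by
  intro h hh τ G ω
  have hτ : 0 < τ := by
    have : 0 < 1 - h ^ 2 := by nlinarith [hh.1, hh.2]
    positivity
  have hdet₁ : 1 / c * ((a ^ 2 + c ^ 2) / c) - (-(a / c)) ^ 2 = 1 := by
    field_simp
    ring
  have hdet₂ : τ * (1 / τ + b ^ 2 * τ) - (-(b * τ)) ^ 2 = 1 := by
    field_simp
    ring
  have hG : ∀ u v, G u v = blockForm (1 / c) (-(a / c)) ((a ^ 2 + c ^ 2) / c)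
      τ (-(b * τ)) (1 / τ + b ^ 2 * τ) u v := fun u v => by
    simp only [G, blockForm, binaryForm]
    ring
  refine ⟨fun u hu => hG u u ▸ blockForm_self_pos (by positivity) (by linarith) hτ
      (by linarith) hu, _, blockComplexStructure_apply_apply hdet₁ hdet₂,
    fun u v => (hG u v).trans (blockForm_eq_darbouxForm ..)⟩
end
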